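/- Let φ be a Leibniz 2-cocycle on the twisted Schrödinger-Virasoro algebra. Applying the cocycle identity to the triple (Y_{−n}, Y_m, M_n) yields (m+n)·φ(M_{m−n}, M_n) = 0 for all m, n ∈ ℤ. -/

import Mathlib

abbrev B : Type := ℤ ⊕ ℤ ⊕ ℤ
abbrev V : Type := B →₀ ℂ

noncomputable def Lg (n : ℤ) : V := Finsupp.single (Sum.inl n) 1
noncomputable def Yg (n : ℤ) : V := Finsupp.single (Sum.inr (Sum.inl n)) 1
noncomputable def Mg (n : ℤ) : V := Finsupp.single (Sum.inr (Sum.inr n)) 1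

/-- Bracket on basis elements of the twisted Schrödinger–Virasoro algebra. -/
noncomputable def brB : B → B → V
  | Sum.inl n, Sum.inl m => ((m : ℂ) - n) • Lg (n + m)
  | Sum.inl n, Sum.inr (Sum.inl m) => ((m : ℂ) - n / 2) • Yg (n + m)
  | Sum.inl n, Sum.inr (Sum.inr p) => (p : ℂ) • Mg (n + p)
  | Sum.inr (Sum.inl m), Sum.inl n => -(((m : ℂ) - n / 2) • Yg (n + m))
  | Sum.inr (Sum.inr p), Sum.inl n => -((p : ℂ) • Mg (n + p))
  | Sum.inr (Sum.inl m), Sum.inr (Sum.inl m') => ((m' : ℂ) - m) • Mg (m + m')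
  | _, _ => 0

/-- The bilinear extension of the bracket to the whole space. -/
noncomputable def bk : V →ₗ[ℂ] V →ₗ[ℂ] V :=
  Finsupp.lsum ℂ fun a => LinearMap.toSpanSingleton ℂ (V →ₗ[ℂ] V)
    (Finsupp.lsum ℂ fun b => LinearMap.toSpanSingleton ℂ V (brB a b))

/-- `φ` is a Leibniz 2-cocycle on the twisted Schrödinger–Virasoro algebra. -/
def IsLeibnizCocycle (φ : V →ₗ[ℂ] V →ₗ[ℂ] ℂ) : Prop :=
  ∀ x y z : V, φ x (bk y z) = φ (bk x y) z - φ (bk x z) y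


lemma bk_single (a b : B) : bk (Finsupp.single a 1) (Finsupp.single b 1) = brB a b := by
  simp [bk, Finsupp.lsum_single]

lemma bk_Yg_Yg (m m' : ℤ) : bk (Yg m) (Yg m') = ((m' : ℂ) - m) • Mg (m + m') :=
  bk_single _ _

lemma bk_Yg_Mg (m p : ℤ) : bk (Yg m) (Mg p) = 0 :=
  bk_single _ _

/-- Only the `Y`–`Y` bracket survives when the cocycle identity is applied to `(Y_a, Y_b, M_p)`. -/
lemma IsLeibnizCocycle.sub_mul_apply_Mg_Mg {φ : V →ₗ[ℂ] V →ₗ[ℂ] ℂ} (hco : IsLeibnizCocycle φ)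
    (a b p : ℤ) : ((b : ℂ) - a) * φ (Mg (a + b)) (Mg p) = 0 := by
  simpa [bk_Yg_Yg, bk_Yg_Mg] using (hco (Yg a) (Yg b) (Mg p)).symm

theorem stmt19 (φ : V →ₗ[ℂ] V →ₗ[ℂ] ℂ) (hco : IsLeibnizCocycle φ) :
    ∀ m n : ℤ, ((m + n : ℤ) : ℂ) * φ (Mg (m - n)) (Mg n) = 0 := by
  intro m n
  have h := hco.sub_mul_apply_Mg_Mg (-n) m n
  rwa [neg_add_eq_sub, Int.cast_neg, sub_neg_eq_add, ← Int.cast_add] at h
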